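/- Let X be a diffeological space and let A and C be subsets of X with C ⊆ A. Suppose there exists a D-open set V of X containing A and a smooth retraction γ : V → A (γ restricted to A is the identity), where A and V carry the sub-diffeology. Then C is D-compact in A if and only if C is D-compact in X. -/

import Mathlib

/-!
Sets that are `D`-open in `X` restrict to sets that are `D`-open in `A`, and the image of a
`D`-compact set under a smooth map is `D`-compact; with `A ↪ X` this gives one direction.
Conversely, since `V` is `D`-open, every set that is `D`-open in `V` is `D`-open in `X`, so a set
`C ⊆ V` that is `D`-compact in `X` is `D`-compact in `V`; its image under the smooth retraction
`γ` is `C` again, now `D`-compact in `A`.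
-/

open Set Function ContDiff
open scoped Classical

noncomputable section

/-- Euclidean space `ℝⁿ`. -/
abbrev Euc (n : ℕ) : Type := EuclideanSpace ℝ (Fin n)

/-- A diffeology on a set `X`: a family of parametrizations (maps from open subsets of
Euclidean spaces into `X`), called plots, satisfying the covering, locality and smooth
compatibility axioms. -/
structure Diffeology' (X : Type*) where
  /-- `IsPlot U P` means that the parametrization `P : U → X` is a plot. -/
  IsPlot : ∀ {n : ℕ} (U : Set (Euc n)), (U → X) → Prop
  /-- Plots are defined on open subsets of Euclidean spaces. -/
  isOpen_dom : ∀ {n : ℕ} {U : Set (Euc n)} {P : U → X}, IsPlot U P → IsOpen U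
  /-- Every constant parametrization is a plot. -/
  const_plot : ∀ {n : ℕ} {U : Set (Euc n)}, IsOpen U → ∀ x : X, IsPlot U fun _ => x
  /-- A parametrization is a plot as soon as it is locally a plot. -/
  locality : ∀ {n : ℕ} {U : Set (Euc n)} {P : U → X}, IsOpen U →
    (∀ u : U, ∃ (W : Set (Euc n)) (hWU : W ⊆ U), IsOpen W ∧ (u : Euc n) ∈ W ∧
      IsPlot W fun w => P ⟨w.1, hWU w.2⟩) → IsPlot U P
  /-- The composite of a plot with a smooth map between open subsets of Euclidean
  spaces is a plot. -/
  smooth_comp : ∀ {n m : ℕ} {U : Set (Euc n)} {P : U → X} {V : Set (Euc m)}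
    {F : Euc m → Euc n}, IsPlot U P → IsOpen V → ContDiffOn ℝ ∞ F V →
    ∀ hFV : MapsTo F V U, IsPlot V fun v => P ⟨F v.1, hFV v.2⟩

namespace Diffeology'

variable {X Y : Type*} (D : Diffeology' X)

/-- A subset `A` of a diffeological space is `D`-open if its preimage under every
plot is open. -/
def IsDOpen (A : Set X) : Prop :=
  ∀ {n : ℕ} {U : Set (Euc n)} {P : U → X}, D.IsPlot U P → IsOpen (P ⁻¹' A)

/-- A subset `A` of a diffeological space is `D`-closed if its preimage under every
plot is closed. -/
def IsDClosed (A : Set X) : Prop :=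
  ∀ {n : ℕ} {U : Set (Euc n)} {P : U → X}, D.IsPlot U P → IsClosed (P ⁻¹' A)

/-- The `D`-closure of a set: the smallest `D`-closed set containing it. -/
def dClosure (A : Set X) : Set X := ⋂₀ {C : Set X | D.IsDClosed C ∧ A ⊆ C}

/-- The sub-diffeology on a subset `A ⊆ X`: plots are the parametrizations into `A`
that are plots of `X`. -/
def sub (A : Set X) : Diffeology' A where
  IsPlot U P := D.IsPlot U fun u => (P u : X)
  isOpen_dom h := D.isOpen_dom h
  const_plot hU a := D.const_plot hU (a : X)
  locality hU h := D.locality hU fun u => by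
    obtain ⟨W, hWU, hW, huW, hP⟩ := h u
    exact ⟨W, hWU, hW, huW, hP⟩
  smooth_comp h hV hF hFV := D.smooth_comp h hV hF hFV

/-- A diffeological space is `D`-Hausdorff if any two distinct points admit disjoint
`D`-open neighbourhoods. -/
def IsDHausdorff : Prop :=
  ∀ x y : X, x ≠ y → ∃ Ux Uy : Set X,
    D.IsDOpen Ux ∧ D.IsDOpen Uy ∧ x ∈ Ux ∧ y ∈ Uy ∧ Ux ∩ Uy = ∅

/-- A subset `C` of a diffeological space `X` is `D`-compact in `X` if every cover of
`C` by `D`-open sets of `X` has a finite subcover. -/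
def IsDCompactIn (C : Set X) : Prop :=
  ∀ S : Set (Set X), (∀ s ∈ S, D.IsDOpen s) → C ⊆ ⋃₀ S →
    ∃ T ⊆ S, T.Finite ∧ C ⊆ ⋃₀ T

/-- A collection of subsets of a diffeological space is locally finite if every point
has a `D`-open neighbourhood meeting only finitely many members of the collection. -/
def LocallyFiniteFam {ι : Type*} (W : ι → Set X) : Prop :=
  ∀ x : X, ∃ V : Set X, D.IsDOpen V ∧ x ∈ V ∧ {i : ι | (W i ∩ V).Nonempty}.Finite

/-- A set of subsets of a diffeological space is locally finite if every point has a
`D`-open neighbourhood meeting only finitely many members. -/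
def LocallyFiniteSet (S : Set (Set X)) : Prop :=
  ∀ x : X, ∃ V : Set X, D.IsDOpen V ∧ x ∈ V ∧ {s ∈ S | (s ∩ V).Nonempty}.Finite

/-- A subset `A` is `D`-paracompact in `X` if every cover of `A` by `D`-open sets of
`X` has a locally finite refinement by `D`-open sets of `X` (covering `A`). -/
def IsDParacompactIn (A : Set X) : Prop :=
  ∀ S : Set (Set X), (∀ s ∈ S, D.IsDOpen s) → A ⊆ ⋃₀ S →
    ∃ R : Set (Set X), (∀ r ∈ R, D.IsDOpen r) ∧ (∀ r ∈ R, ∃ s ∈ S, r ⊆ s) ∧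
      A ⊆ ⋃₀ R ∧ D.LocallyFiniteSet R

/-- A diffeological space is `D`-paracompact if it is `D`-paracompact in itself. -/
def IsDParacompact : Prop := D.IsDParacompactIn univ

/-- A diffeological space is `D`-compact if it is `D`-compact in itself. -/
def IsDCompact : Prop := D.IsDCompactIn univ

/-- A diffeological space is `D`-normal if disjoint `D`-closed sets can be separated
by disjoint `D`-open sets. -/
def IsDNormal : Prop :=
  ∀ A B : Set X, D.IsDClosed A → D.IsDClosed B → A ∩ B = ∅ →
    ∃ UA UB : Set X, D.IsDOpen UA ∧ D.IsDOpen UB ∧ A ⊆ UA ∧ B ⊆ UB ∧ UA ∩ UB = ∅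

end Diffeology'

/-- A map between diffeological spaces is smooth if it sends plots to plots. -/
def DSmooth {X Y : Type*} (DX : Diffeology' X) (DY : Diffeology' Y) (f : X → Y) : Prop :=
  ∀ {n : ℕ} {U : Set (Euc n)} {P : U → X}, DX.IsPlot U P → DY.IsPlot U (f ∘ P)

theorem DSmooth.isDOpen_preimage {X Y : Type*} {DX : Diffeology' X} {DY : Diffeology' Y}
    {f : X → Y} (hf : DSmooth DX DY f) {s : Set Y} (hs : DY.IsDOpen s) :
    DX.IsDOpen (f ⁻¹' s) :=
  fun hP => hs (hf hP)

theorem dSmooth_subtype_val {X : Type*} (D : Diffeology' X) (A : Set X) :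
    DSmooth (D.sub A) D Subtype.val :=
  fun hP => hP

theorem DSmooth.isDCompactIn_image {X Y : Type*} {DX : Diffeology' X} {DY : Diffeology' Y}
    {f : X → Y} (hf : DSmooth DX DY f) {K : Set X} (hK : DX.IsDCompactIn K) :
    DY.IsDCompactIn (f '' K) := by
  intro S hS hcov
  obtain ⟨T, hTS, hTfin, hKT⟩ := exists_subset_image_finite_and.1 <| hK (preimage f '' S)
    (forall_mem_image.2 fun s hs => hf.isDOpen_preimage (hS s hs))
    (by simpa [image_subset_iff, preimage_sUnion] using hcov)
  refine ⟨T, hTS, hTfin, ?_⟩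
  simpa [image_subset_iff, preimage_sUnion] using hKT

namespace Diffeology'

variable {X Y : Type*} {D : Diffeology' X}

theorem IsDCompactIn.of_image {DY : Diffeology' Y} {f : X → Y} (hinj : Injective f)
    (hopen : ∀ s, D.IsDOpen s → DY.IsDOpen (f '' s)) {K : Set X}
    (hK : DY.IsDCompactIn (f '' K)) : D.IsDCompactIn K := by
  intro S hS hcov
  obtain ⟨T, hTS, hTfin, hKT⟩ := exists_subset_image_finite_and.1 <| hK (image f '' S)
    (forall_mem_image.2 fun s hs => hopen s (hS s hs))
    (by rw [← image_sUnion]; exact image_mono hcov)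
  rw [← image_sUnion, image_subset_image_iff hinj] at hKT
  exact ⟨T, hTS, hTfin, hKT⟩

theorem IsPlot.restrict {n : ℕ} {U W : Set (Euc n)} {P : U → X} (hP : D.IsPlot U P)
    (hW : IsOpen W) (hWU : W ⊆ U) : D.IsPlot W fun w => P ⟨w, hWU w.2⟩ :=
  D.smooth_comp hP hW contDiffOn_id hWU

theorem IsDOpen.image_val {V : Set X} (hV : D.IsDOpen V) {s : Set V}
    (hs : (D.sub V).IsDOpen s) : D.IsDOpen (Subtype.val '' s) := by
  intro n U P hP
  -- restrict `P` to the open set where it lands in `V`, where it is a plot of `D.sub V`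
  set W : Set (Euc n) := Subtype.val '' (P ⁻¹' V)
  have hWU : W ⊆ U := by rintro _ ⟨u, -, rfl⟩; exact u.2
  have hW : IsOpen W := (D.isOpen_dom hP).isOpenMap_subtype_val _ (hV hP)
  have hQV : ∀ w : W, P ⟨w, hWU w.2⟩ ∈ V := by rintro ⟨_, u, hu, rfl⟩; exact hu
  let Q : W → V := fun w => ⟨P ⟨w, hWU w.2⟩, hQV w⟩
  have hQ : (D.sub V).IsPlot W Q := hP.restrict hW hWU
  have hPs : P ⁻¹' (Subtype.val '' s) = Subtype.val ⁻¹' (Subtype.val '' (Q ⁻¹' s)) := by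
    ext u
    constructor
    · rintro ⟨⟨x, hxV⟩, hx, rfl : x = P u⟩
      exact ⟨⟨u, u, hxV, rfl⟩, hx, rfl⟩
    · rintro ⟨⟨w, hwW⟩, hw, rfl : w = u⟩
      exact ⟨Q ⟨u, hwW⟩, hw, rfl⟩
  rw [hPs]
  exact (hW.isOpenMap_subtype_val _ (hs hQ)).preimage continuous_subtype_val

theorem IsDCompactIn.preimage_val_of_isDOpen {V C : Set X} (hV : D.IsDOpen V)
    (hCV : C ⊆ V) (hC : D.IsDCompactIn C) : (D.sub V).IsDCompactIn (Subtype.val ⁻¹' C) :=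
  .of_image Subtype.val_injective (fun _ => hV.image_val)
    (by rwa [Subtype.image_preimage_coe, inter_eq_right.2 hCV])

end Diffeology'

/-- Let `C ⊆ A` be subsets of a diffeological space `X`. If there is a `D`-open set
`V ⊇ A` together with a smooth retraction `γ : V → A` (with respect to the
sub-diffeologies), then `C` is `D`-compact in `A` if and only if `C` is `D`-compact
in `X`. -/
theorem isDCompactIn_sub_iff_of_retract {X : Type*} (D : Diffeology' X)
    (A C : Set X) (hCA : C ⊆ A) (V : Set X) (hV : D.IsDOpen V) (hAV : A ⊆ V)
    (γ : V → A) (hγ : DSmooth (D.sub V) (D.sub A) γ)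
    (hret : ∀ a : A, γ ⟨(a : X), hAV a.2⟩ = a) :
    (D.sub A).IsDCompactIn (Subtype.val ⁻¹' C) ↔ D.IsDCompactIn C := by
  constructor
  · intro hC
    have h := DSmooth.isDCompactIn_image (dSmooth_subtype_val D A) hC
    rwa [Subtype.image_preimage_coe, inter_eq_right.2 hCA] at h
  · intro hC
    have hγC : γ '' (Subtype.val ⁻¹' C) = Subtype.val ⁻¹' C := by
      ext a
      constructor
      · rintro ⟨⟨x, hxV⟩, hxC, rfl⟩
        simpa [hret ⟨x, hCA hxC⟩] using hxC
      · intro haC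
        exact ⟨⟨a, hAV a.2⟩, haC, hret a⟩
    rw [← hγC]
    exact hγ.isDCompactIn_image (hC.preimage_val_of_isDOpen hV (hCA.trans hAV))

end
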